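/- Let A be a commutative ring, f ∈ A a non-zero-divisor, A_f the localization, Â = lim A/(f^n) the completion, and let M be an A-module that is f-regular (multiplication by f on M is injective). Then the natural commutative square of A-modules M → A_f ⊗_A M, M → Â ⊗_A M, with both composites to A_f ⊗_A Â ⊗_A M, is a pullback square: M is the fiber product of A_f ⊗_A M and Â ⊗_A M over A_f ⊗_A Â ⊗_A M. -/

import Mathlib

/-!
The map `A → A_f × Â`, `a ↦ (a, a)`, followed by `A_f × Â → A_f ⊗ Â`, `(l, c) ↦ l ⊗ 1 - 1 ⊗ c`,
is exact in the middle, and the second map is surjective. Surjectivity: every `c ∈ Â` is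
`a + f ^ n • d` with `a ∈ A`, and `l ⊗ f ^ n • d` lies in `1 ⊗ Â` once `f ^ n • l ∈ A`. Exactness:
if `l ⊗ 1 = 1 ⊗ c` and `f ^ n • l = a ∈ A`, then `f ^ n • c = a` in `Â`, because `f` is regular on
`Â` and hence `Â → A_f ⊗ Â` is injective; so `a ∈ f ^ n A` and `(l, c)` comes from `a / f ^ n ∈ A`.
Tensoring with `M` is right exact, which produces the glued element of `M`; it is unique since
`M → A_f ⊗ M` is injective when `f` is `M`-regular.
-/

open TensorProduct

theorem mem_span_singleton_pow_smul_top_iff {A M : Type*} [CommRing A] [AddCommGroup M]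
    [Module A M] (f : A) {n : ℕ} {x : M} :
    x ∈ (Ideal.span {f} ^ n • ⊤ : Submodule A M) ↔ ∃ y, f ^ n • y = x := by
  rw [Ideal.span_singleton_pow, Submodule.ideal_span_singleton_smul,
    Submodule.mem_smul_pointwise_iff_exists]
  simp

theorem TensorProduct.mk_localizationAway_injective {A N : Type*} [CommRing A] [AddCommGroup N]
    [Module A N] {f : A} (hf : IsSMulRegular N f) :
    Function.Injective (TensorProduct.mk A (Localization.Away f) N 1) :=
  (IsLocalizedModule.injective_iff_isRegular (Submonoid.powers f) _).mpr
    fun ⟨_, n, hn⟩ => hn ▸ hf.pow n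

theorem algebraMap_tmul_eq_one_tmul_smul {A B N : Type*} [CommRing A] [Semiring B] [Algebra A B]
    [AddCommGroup N] [Module A N] (a : A) (x : N) :
    algebraMap A B a ⊗ₜ[A] x = 1 ⊗ₜ (a • x) := by
  rw [Algebra.algebraMap_eq_smul_one, smul_tmul]

theorem IsLocalization.Away.exists_pow_smul_eq_algebraMap {A S : Type*} [CommRing A] [CommRing S]
    [Algebra A S] (f : A) [IsLocalization.Away f S] (l : S) :
    ∃ (n : ℕ) (a : A), f ^ n • l = algebraMap A S a := by
  obtain ⟨n, a, h⟩ := IsLocalization.Away.surj f l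
  exact ⟨n, a, by rw [Algebra.smul_def, map_pow, mul_comm, h]⟩

namespace AdicCompletion

variable {A M : Type*} [CommRing A] [AddCommGroup M] [Module A M] (f : A)

theorem exists_pow_smul_eq_of_val_eq_zero {n : ℕ} {c : AdicCompletion (Ideal.span {f}) M}
    (hc : c.val n = 0) : ∃ d, f ^ n • d = c := by
  rw [← mem_span_singleton_pow_smul_top_iff,
    pow_smul_top_eq_ker_eval (Submodule.fg_span_singleton f)]
  exact hc

theorem exists_of_add_pow_smul_eq (n : ℕ) (c : AdicCompletion (Ideal.span {f}) M) :
    ∃ x d, of (Ideal.span {f}) M x + f ^ n • d = c := by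
  obtain ⟨x, hx⟩ := Submodule.Quotient.mk_surjective _ (c.val n)
  obtain ⟨d, hd⟩ := exists_pow_smul_eq_of_val_eq_zero f (c := c - of _ M x) <| by
    rw [val_sub_apply, of_apply, Submodule.mkQ_apply, hx, sub_self]
  exact ⟨x, d, by rw [hd, add_sub_cancel]⟩

theorem exists_pow_smul_eq_of_of_eq_pow_smul {n : ℕ} {x : M}
    {c : AdicCompletion (Ideal.span {f}) M} (h : of (Ideal.span {f}) M x = f ^ n • c) :
    ∃ y, f ^ n • y = x := by
  have hx : (of (Ideal.span {f}) M x).val n = 0 := by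
    obtain ⟨y, hy⟩ := Submodule.Quotient.mk_surjective _ (c.val n)
    rw [h, val_smul_apply, ← hy, ← Submodule.Quotient.mk_smul, Submodule.Quotient.mk_eq_zero,
      mem_span_singleton_pow_smul_top_iff]
    exact ⟨y, rfl⟩
  rwa [of_apply, Submodule.mkQ_apply, Submodule.Quotient.mk_eq_zero,
    mem_span_singleton_pow_smul_top_iff] at hx

theorem of_eq_smul_one (a : A) : of (Ideal.span {f}) A a = a • 1 := by
  rw [← Algebra.algebraMap_eq_smul_one, algebraMap_apply, Algebra.algebraMap_self, RingHom.id_apply]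

variable {f}

theorem _root_.IsSMulRegular.adicCompletion (hf : IsSMulRegular M f) :
    IsSMulRegular (AdicCompletion (Ideal.span {f}) M) f := by
  refine isSMulRegular_iff_right_eq_zero_of_smul.mpr fun c hc => ext fun k => ?_
  obtain ⟨a, ha⟩ := Submodule.Quotient.mk_surjective _ (c.val (k + 1))
  have hfa : f • a ∈ (Ideal.span {f} ^ (k + 1) • ⊤ : Submodule A M) := by
    rw [← Submodule.Quotient.mk_eq_zero, Submodule.Quotient.mk_smul, ha, ← val_smul_apply, hc,
      val_zero_apply]
  obtain ⟨b, hb⟩ := (mem_span_singleton_pow_smul_top_iff f).mp hfa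
  have hab : f ^ k • b = a := hf <| by simp only [← hb, pow_succ', mul_smul]
  rw [val_zero_apply, ← c.prop (Nat.le_succ k), ← ha]
  exact (Submodule.Quotient.mk_eq_zero _).mpr <|
    (mem_span_singleton_pow_smul_top_iff f).mpr ⟨b, hab⟩

end AdicCompletion

noncomputable section

namespace BeauvilleLaszlo

variable {A : Type*} [CommRing A] (f : A)

local notation "A_f" => Localization (Submonoid.powers f)
local notation "Â" => AdicCompletion (Ideal.span (singleton f)) A

def diagonal : A →ₗ[A] A_f × Â :=
  (Algebra.linearMap A A_f).prod (AdicCompletion.of _ A)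

def difference : A_f × Â →ₗ[A] A_f ⊗[A] Â :=
  (TensorProduct.mk A A_f Â).flip 1 ∘ₗ LinearMap.fst A A_f Â -
    TensorProduct.mk A A_f Â 1 ∘ₗ LinearMap.snd A A_f Â

theorem diagonal_apply (a : A) :
    diagonal f a = (algebraMap A A_f a, AdicCompletion.of (Ideal.span {f}) A a) := rfl

theorem difference_apply (l : A_f) (c : Â) : difference f (l, c) = l ⊗ₜ 1 - 1 ⊗ₜ c := rfl

theorem difference_surjective : Function.Surjective (difference f) := by
  intro z
  induction z using TensorProduct.induction_on with
  | zero => exact ⟨0, map_zero _⟩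
  | tmul l c =>
    obtain ⟨n, a', hl⟩ := IsLocalization.Away.exists_pow_smul_eq_algebraMap f l
    obtain ⟨a, d, rfl⟩ := AdicCompletion.exists_of_add_pow_smul_eq f n c
    have h₁ : l ⊗ₜ[A] AdicCompletion.of (Ideal.span {f}) A a = (a • l) ⊗ₜ 1 := by
      rw [AdicCompletion.of_eq_smul_one, tmul_smul, smul_tmul']
    have h₂ : l ⊗ₜ[A] (f ^ n • d) = 1 ⊗ₜ (a' • d) := by
      rw [← smul_tmul, hl, algebraMap_tmul_eq_one_tmul_smul]
    refine ⟨(a • l, -(a' • d)), ?_⟩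
    rw [difference_apply, tmul_neg, sub_neg_eq_add, tmul_add, h₁, h₂]
  | add x y hx hy =>
    obtain ⟨p, rfl⟩ := hx
    obtain ⟨q, rfl⟩ := hy
    exact ⟨p + q, map_add _ p q⟩

theorem exact_diagonal_difference (hf : IsSMulRegular A f) :
    Function.Exact (diagonal f) (difference f) := by
  have hÂ := hf.adicCompletion
  rintro ⟨l, c⟩
  constructor
  · intro h
    rw [difference_apply, sub_eq_zero] at h
    obtain ⟨n, a, hl⟩ := IsLocalization.Away.exists_pow_smul_eq_algebraMap f l
    have hc : f ^ n • c = AdicCompletion.of _ A a := by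
      refine TensorProduct.mk_localizationAway_injective hÂ ?_
      calc (1 : A_f) ⊗ₜ[A] (f ^ n • c) = f ^ n • (l ⊗ₜ[A] (1 : Â)) := by rw [h, tmul_smul]
        _ = 1 ⊗ₜ AdicCompletion.of (Ideal.span {f}) A a := by
          rw [smul_tmul', hl, algebraMap_tmul_eq_one_tmul_smul, AdicCompletion.of_eq_smul_one]
    obtain ⟨b, rfl⟩ := AdicCompletion.exists_pow_smul_eq_of_of_eq_pow_smul f hc.symm
    have hA_f : IsSMulRegular A_f (f ^ n) := (isSMulRegular_algebraMap_iff A_f).mp <|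
      (IsLocalization.map_units A_f (⟨f ^ n, n, rfl⟩ : Submonoid.powers f)).isSMulRegular A_f
    refine ⟨b, Prod.ext (hA_f ?_) (hÂ.pow n ?_)⟩
    · dsimp only [diagonal_apply]
      rw [hl, Algebra.smul_def, smul_eq_mul, map_mul]
    · dsimp only [diagonal_apply]
      rw [hc, map_smul]
  · rintro ⟨a, ha⟩
    rw [← ha, diagonal_apply, difference_apply, algebraMap_tmul_eq_one_tmul_smul,
      AdicCompletion.of_eq_smul_one, sub_self]

variable (M : Type*) [AddCommGroup M] [Module A M]

theorem exact_gluing (hf : IsSMulRegular A f) :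
    Function.Exact ((TensorProduct.mk A A_f M 1).prod (TensorProduct.mk A Â M 1))
      (LinearMap.lTensor A_f (TensorProduct.mk A Â M 1) ∘ₗ
          LinearMap.fst A (A_f ⊗[A] M) (Â ⊗[A] M) -
        TensorProduct.mk A A_f (Â ⊗[A] M) 1 ∘ₗ LinearMap.snd A (A_f ⊗[A] M) (Â ⊗[A] M)) := by
  refine (Function.Exact.iff_of_ladder_linearEquiv (e₁ := TensorProduct.lid A M)
    (e₂ := TensorProduct.prodLeft A A A_f Â M) (e₃ := TensorProduct.assoc A A_f Â M) ?_ ?_).mpr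
    (rTensor_exact M (exact_diagonal_difference f hf) (difference_surjective f))
  · refine TensorProduct.ext' fun a m => ?_
    simp [diagonal_apply, algebraMap_tmul_eq_one_tmul_smul, AdicCompletion.of_eq_smul_one,
      smul_tmul]
  · refine TensorProduct.ext' fun ⟨l, c⟩ m => ?_
    simp [difference_apply, sub_tmul]

end BeauvilleLaszlo

end

open BeauvilleLaszlo in
/-- Beauville–Laszlo glueing at the level of objects: for a non-zero-divisor `f ∈ A`
and an `f`-regular module `M`, the square formed by `M → A_f ⊗ M`, `M → Â ⊗ M` and
the two maps to `A_f ⊗ Â ⊗ M` commutes and is a pullback square: every compatible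
pair comes from a unique element of `M`. -/
theorem stmt_16 {A : Type} [CommRing A] (f : A) (hf : f ∈ nonZeroDivisors A)
    (M : Type) [AddCommGroup M] [Module A M]
    (hreg : Function.Injective (fun m : M => f • m)) :
    (∀ m : M,
      LinearMap.lTensor (Localization (Submonoid.powers f))
          (TensorProduct.mk A (AdicCompletion (Ideal.span {f}) A) M 1)
          (TensorProduct.mk A (Localization (Submonoid.powers f)) M 1 m)
        = TensorProduct.mk A (Localization (Submonoid.powers f))
            ((AdicCompletion (Ideal.span {f}) A) ⊗[A] M) 1
            (TensorProduct.mk A (AdicCompletion (Ideal.span {f}) A) M 1 m)) ∧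
    (∀ (x : (Localization (Submonoid.powers f)) ⊗[A] M)
        (y : (AdicCompletion (Ideal.span {f}) A) ⊗[A] M),
      LinearMap.lTensor (Localization (Submonoid.powers f))
          (TensorProduct.mk A (AdicCompletion (Ideal.span {f}) A) M 1) x
        = TensorProduct.mk A (Localization (Submonoid.powers f))
            ((AdicCompletion (Ideal.span {f}) A) ⊗[A] M) 1 y →
      ∃! m : M,
        TensorProduct.mk A (Localization (Submonoid.powers f)) M 1 m = x ∧
        TensorProduct.mk A (AdicCompletion (Ideal.span {f}) A) M 1 m = y) := by
  refine ⟨fun m => rfl, fun x y hxy => ?_⟩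
  have hA : IsSMulRegular A f := (isRegular_iff_mem_nonZeroDivisors.mpr hf).left.isSMulRegular
  obtain ⟨m, hm⟩ := (exact_gluing f M hA (x, y)).mp (by simp [hxy])
  obtain ⟨hmx, hmy⟩ := Prod.ext_iff.mp hm
  exact ⟨m, ⟨hmx, hmy⟩, fun m' hm' =>
    TensorProduct.mk_localizationAway_injective hreg (hm'.1.trans hmx.symm)⟩
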